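/- Let λ' be a delaying of λ satisfying a set of demands D (each demand (u,v,t) ∈ D requires a strictly increasing temporal path from u to v with arrival time at most t under λ'). Let T_max = max over (u,v,t) ∈ D of t. Define λ'' by λ''(e) = min(λ'(e), T_max) if λ(e) ≤ T_max and λ''(e) = λ(e) otherwise. Then λ'' is a delaying of λ that also satisfies every demand in D. -/

import Mathlib

/-! A path witnessing a demand `(u, v, t)` only uses edges whose delayed label is at most
`t ≤ T_max`; capping at `T_max` leaves those labels unchanged, so the same path still
witnesses the demand. -/

open List

/-- A temporal path witnessing a demand `(u, v, t)`: a walk whose edge labels are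
strictly increasing and all at most `t` (since labels strictly increase, the
arrival time, i.e. the last label, is at most `t`). -/
def SatisfiesDemand {V : Type*} (G : SimpleGraph V) (lab : Sym2 V → ℕ)
    (u v : V) (t : ℕ) : Prop :=
  ∃ p : G.Walk u v, (p.edges.map lab).Chain' (· < ·) ∧ ∀ e ∈ p.edges, lab e ≤ t

def capLabel {α : Type*} (lab lab' : α → ℕ) (T : ℕ) (e : α) : ℕ :=
  if lab e ≤ T then min (lab' e) T else lab e

section capLabel

variable {α : Type*} {lab lab' : α → ℕ} {T : ℕ}

theorem le_capLabel (hdelay : ∀ e, lab e ≤ lab' e) (e : α) : lab e ≤ capLabel lab lab' T e := by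
  unfold capLabel
  split_ifs with h
  · exact le_min (hdelay e) h
  · exact le_rfl

theorem capLabel_eq_of_le {e : α} (hdelay : lab e ≤ lab' e) (hT : lab' e ≤ T) :
    capLabel lab lab' T e = lab' e := by
  rw [capLabel, if_pos (hdelay.trans hT), min_eq_left hT]

end capLabel

namespace SatisfiesDemand

variable {V : Type*} {G : SimpleGraph V} {lab₁ lab₂ : Sym2 V → ℕ} {u v : V} {t : ℕ}

theorem of_eq_of_le (h : SatisfiesDemand G lab₁ u v t)
    (heq : ∀ e, lab₁ e ≤ t → lab₂ e = lab₁ e) : SatisfiesDemand G lab₂ u v t := by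
  obtain ⟨p, hchain, hle⟩ := h
  have hpeq : ∀ e ∈ p.edges, lab₂ e = lab₁ e := fun e he => heq e (hle e he)
  refine ⟨p, ?_, fun e he => ?_⟩
  · rwa [List.map_congr_left hpeq]
  · exact (hpeq e he).trans_le (hle e he)

theorem capLabel {lab lab' : Sym2 V → ℕ} {T : ℕ} (h : SatisfiesDemand G lab' u v t)
    (hdelay : ∀ e, lab e ≤ lab' e) (htT : t ≤ T) :
    SatisfiesDemand G (_root_.capLabel lab lab' T) u v t :=
  h.of_eq_of_le fun e he => capLabel_eq_of_le (hdelay e) (he.trans htT)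

end SatisfiesDemand

/-- Capping a delaying at `T_max` (on edges whose original label is at most `T_max`)
yields a delaying that still satisfies every demand. -/
theorem cap_delaying_at_Tmax {V : Type*} (G : SimpleGraph V) (lab lab' : Sym2 V → ℕ)
    (D : Finset (V × V × ℕ)) (Tmax : ℕ) (hT : Tmax = D.sup (fun d => d.2.2))
    (hdelay : ∀ e, lab e ≤ lab' e)
    (hsat : ∀ d ∈ D, SatisfiesDemand G lab' d.1 d.2.1 d.2.2)
    (lab'' : Sym2 V → ℕ)
    (hdef : ∀ e, lab'' e = if lab e ≤ Tmax then min (lab' e) Tmax else lab e) :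
    (∀ e, lab e ≤ lab'' e) ∧ ∀ d ∈ D, SatisfiesDemand G lab'' d.1 d.2.1 d.2.2 := by
  obtain rfl : lab'' = capLabel lab lab' Tmax := funext hdef
  refine ⟨le_capLabel hdelay, fun d hd => (hsat d hd).capLabel hdelay ?_⟩
  exact hT ▸ Finset.le_sup (f := fun d => d.2.2) hd
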